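/- arXiv:1411.6596 — 3 statements merged into one kernel-verified Lean document; each statement's English description precedes it below -/
import Mathlib

section
/- For all integers 1 ≤ k ≤ N and every p ∈ [0,1], the probability that the Erdős–Rényi random graph G_{N,p} contains a vertex set S with |S| = k spanning at least 2k edges (i.e., with e(S) ≥ 2k, where e(S) is the number of edges with both endpoints in S) is at most ( k e³ (Np)² / (2N) )^k. -/
open MeasureTheory Filter Real ENNReal

noncomputable section

/-- Euclidean distance between two points of `ℝ^d` represented as functions `Fin d → ℝ`. -/
def eucDist {d : ℕ} (x y : Fin d → ℝ) : ℝ := Real.sqrt (∑ i, (x i - y i) ^ 2)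

lemma eucDist_symm {d : ℕ} (x y : Fin d → ℝ) : eucDist x y = eucDist y x := by
  unfold eucDist
  congr 1
  exact Finset.sum_congr rfl fun i _ => by rw [← neg_sub, neg_sq]

/-- The weight of an unordered pair of vertices: the Euclidean distance between the
corresponding embedded points. -/
def pairWeight {V : Type*} {d : ℕ} (X : V → (Fin d → ℝ)) : Sym2 V → ℝ :=
  Sym2.lift ⟨fun i j => eucDist (X i) (X j), fun _ _ => eucDist_symm _ _⟩

/-- The simple graph determined by a Boolean indicator of which unordered pairs are edges. -/
def graphOf {V : Type*} (e : Sym2 V → Bool) : SimpleGraph V where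
  Adj i j := i ≠ j ∧ e s(i, j)
  symm := ⟨fun i j h => by
    obtain ⟨h1, h2⟩ := h
    exact ⟨h1.symm, by rwa [Sym2.eq_swap]⟩⟩
  loopless := ⟨fun i h => h.1 rfl⟩

/-- The total weight of a walk: the sum of the weights of its edges. -/
def walkCost {V : Type*} {G : SimpleGraph V} {u v : V} (w : Sym2 V → ℝ) (p : G.Walk u v) : ℝ :=
  (p.edges.map w).sum

/-- Weighted graph distance: the infimum of the weights of walks joining the two vertices,
equal to `∞` if there is no such walk. -/
def graphDist {V : Type*} (G : SimpleGraph V) (w : Sym2 V → ℝ) (u v : V) : ℝ≥0∞ :=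
  ⨅ (p : G.Walk u v), ENNReal.ofReal (walkCost w p)

/-- `G` has a Hamiltonian cycle. -/
def HasHamCycle {V : Type*} (G : SimpleGraph V) : Prop :=
  letI := Classical.decEq V
  ∃ (v : V) (c : G.Walk v v), c.IsHamiltonianCycle

/-- The minimum total weight of a Hamiltonian cycle of `G`, with the default value `dflt`
when `G` has no Hamiltonian cycle. -/
def TSP {V : Type*} (G : SimpleGraph V) (w : Sym2 V → ℝ) (dflt : ℝ) : ℝ :=
  letI := Classical.decEq V
  letI := Classical.propDecidable
  if (∃ (v : V) (c : G.Walk v v), c.IsHamiltonianCycle) then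
    sInf {x | ∃ (v : V) (c : G.Walk v v), c.IsHamiltonianCycle ∧ x = walkCost w c}
  else dflt

/-- The uniform distribution on the unit cube `[0,1]^d`. -/
def unifCube (d : ℕ) : Measure (Fin d → ℝ) := volume.restrict (Set.Icc 0 1)

instance (d : ℕ) : IsProbabilityMeasure (unifCube d) := by
  constructor
  rw [unifCube, Measure.restrict_apply_univ, Real.volume_Icc_pi]
  simp

/-- The Bernoulli distribution on `Bool` with success probability `p` (truncated at `1`). -/
def bern (p : ℝ) : Measure Bool :=
  (PMF.bernoulli (min (Real.toNNReal p) 1) (min_le_right _ _)).toMeasure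

instance (p : ℝ) : IsProbabilityMeasure (bern p) := PMF.toMeasure.isProbabilityMeasure _

/-- The law of the random weighted graph `𝒳_{n,p}`: `n` independent uniform points in the
unit cube `[0,1]^d`, together with independent Bernoulli(p) indicators, one for each
unordered pair of vertices. -/
def XMeasure (d n : ℕ) (p : ℝ) :
    Measure ((Fin n → (Fin d → ℝ)) × (Sym2 (Fin n) → Bool)) :=
  (Measure.pi fun _ => unifCube d).prod (Measure.pi fun _ => bern p)

instance (d n : ℕ) (p : ℝ) : IsProbabilityMeasure (XMeasure d n p) := by
  unfold XMeasure; infer_instance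

/-- The law of the Erdős–Rényi random graph `G_{n,q}`: independent Bernoulli(q)
indicators, one for each unordered pair of vertices. -/
def ERMeasure (n : ℕ) (q : ℝ) : Measure (Sym2 (Fin n) → Bool) :=
  Measure.pi fun _ => bern q

instance (n : ℕ) (q : ℝ) : IsProbabilityMeasure (ERMeasure n q) := by
  unfold ERMeasure; infer_instance

/-! Union bound: a `k`-set `S` spanning `2k` edges contains one of the `C(#S.sym2, 2k)`
sets of `2k` pairs inside `S`, all present with probability at most `p ^ (2k)`, and
`#S.sym2 ≤ k²`. Summing over the `C(N, k)` sets `S` and using `C(n, m) ≤ (e n / m) ^ m` twice,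
the bound is `(e N / k) ^ k (e k / 2) ^ (2k) p ^ (2k) = (e³ k N p² / 4) ^ k`. -/

open Finset

lemma bern_singleton_true_le (p : ℝ) : bern p {true} ≤ ENNReal.ofReal p := by
  rw [bern, PMF.toMeasure_apply_singleton _ _ (measurableSet_singleton _)]
  exact ENNReal.coe_le_coe.2 (min_le_left _ _)

lemma ENNReal.ofReal_pow_le (p : ℝ) (n : ℕ) : ENNReal.ofReal p ^ n ≤ ENNReal.ofReal (p ^ n) := by
  rcases le_total 0 p with hp | hp
  · rw [ENNReal.ofReal_pow hp]
  · rw [ENNReal.ofReal_of_nonpos hp]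
    rcases n.eq_zero_or_pos with rfl | hn
    · simp
    · simp [zero_pow hn.ne']

section IndependentCoordinates

variable {ι β : Type*} [Fintype ι] [MeasurableSpace β] (μ : Measure β) [IsProbabilityMeasure μ]
  (A : Set β)

lemma measure_pi_forall_mem (T : Finset ι) :
    Measure.pi (fun _ : ι => μ) {x | ∀ i ∈ T, x i ∈ A} = μ A ^ #T := by
  have hpi : {x : ι → β | ∀ i ∈ T, x i ∈ A} = (T : Set ι).pi fun _ => A := by
    ext x; simp [Set.mem_pi]
  rw [hpi, Measure.pi_pi_finset, prod_const]

lemma measure_pi_le_card_filter_mem [DecidablePred (· ∈ A)] (F : Finset ι) (m : ℕ) :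
    Measure.pi (fun _ : ι => μ) {x | m ≤ #{i ∈ F | x i ∈ A}} ≤ (#F).choose m * μ A ^ m := by
  have hcover : {x : ι → β | m ≤ #{i ∈ F | x i ∈ A}} ⊆
      ⋃ T ∈ F.powersetCard m, {x | ∀ i ∈ T, x i ∈ A} := by
    intro x hx
    obtain ⟨T, hTF, hTm⟩ := exists_subset_card_eq hx
    exact Set.mem_biUnion (mem_powersetCard.2 ⟨hTF.trans (filter_subset _ _), hTm⟩)
      fun i hi => (mem_filter.1 (hTF hi)).2
  calc _ ≤ ∑ T ∈ F.powersetCard m, Measure.pi (fun _ : ι => μ) {x | ∀ i ∈ T, x i ∈ A} :=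
        (measure_mono hcover).trans (measure_biUnion_finset_le _ _)
    _ = (#F).choose m * μ A ^ m := by
        rw [sum_congr rfl fun T hT => by rw [measure_pi_forall_mem, (mem_powersetCard.1 hT).2],
          sum_const, card_powersetCard, nsmul_eq_mul]

end IndependentCoordinates

lemma Finset.card_sym2_le_sq {α : Type*} [DecidableEq α] (s : Finset α) : #s.sym2 ≤ #s ^ 2 := by
  rw [card_sym2, Nat.choose_two_right]
  refine Nat.div_le_of_le_mul ?_
  rcases (#s).eq_zero_or_pos with h | h
  · simp [h]
  · rw [Nat.add_sub_cancel]; nlinarith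

lemma Nat.choose_le_exp_one_mul_div_pow (n k : ℕ) : (n.choose k : ℝ) ≤ (exp 1 * n / k) ^ k := by
  rcases k.eq_zero_or_pos with rfl | hk
  · simp
  have hk' : (0 : ℝ) < k := by exact_mod_cast hk
  have hkk : (k : ℝ) ^ k ≤ exp k * k.factorial :=
    (div_le_iff₀ (by positivity)).1 (pow_div_factorial_le_exp (k : ℝ) hk'.le k)
  calc (n.choose k : ℝ) ≤ n ^ k / k.factorial := Nat.choose_le_pow_div k n
    _ ≤ (exp 1 * n / k) ^ k := by
        rw [div_pow, mul_pow, exp_one_pow, div_le_div_iff₀ (by positivity) (by positivity)]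
        calc (n : ℝ) ^ k * k ^ k ≤ n ^ k * (exp k * k.factorial) := by gcongr
          _ = _ := by ring

lemma choose_mul_choose_sq_mul_pow_le (N k : ℕ) (p : ℝ) :
    (N.choose k : ℝ) * ((k ^ 2).choose (2 * k) : ℝ) * p ^ (2 * k)
      ≤ (k * exp 3 * ((N : ℝ) * p) ^ 2 / (2 * N)) ^ k := by
  rcases k.eq_zero_or_pos with rfl | hk
  · simp
  have hk' : (k : ℝ) ≠ 0 := by positivity
  have hsq : ((k ^ 2).choose (2 * k) : ℝ) ≤ (exp 1 * k / 2) ^ (2 * k) := by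
    convert Nat.choose_le_exp_one_mul_div_pow (k ^ 2) (2 * k) using 2
    push_cast; field_simp
  have he3 : exp 3 = exp 1 ^ 3 := by rw [exp_one_pow]; norm_num
  have hrhs : (k * exp 3 * ((N : ℝ) * p) ^ 2 / (2 * N)) = exp 1 ^ 3 * k * N * p ^ 2 / 2 := by
    -- at `N = 0` both sides vanish, since `x / 0 = 0`
    rcases eq_or_ne (N : ℝ) 0 with hN | hN
    · simp [hN]
    · rw [he3]; field_simp
  calc _ ≤ (exp 1 * N / k) ^ k * (exp 1 * k / 2) ^ (2 * k) * p ^ (2 * k) := by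
        gcongr
        · exact (even_two_mul k).pow_nonneg p
        · exact Nat.choose_le_exp_one_mul_div_pow N k
    _ = (exp 1 ^ 3 * k * N * p ^ 2 / 4) ^ k := by
        rw [pow_mul, pow_mul, ← mul_pow, ← mul_pow]
        congr 1
        field_simp
        ring
    _ ≤ _ := by
        rw [hrhs]
        gcongr
        norm_num

lemma ncard_edges_within_le_card_filter_sym2 {V : Type*} [DecidableEq V] (S : Finset V)
    (x : Sym2 V → Bool) :
    {e : Sym2 V | ¬e.IsDiag ∧ (∀ v ∈ e, v ∈ S) ∧ x e = true}.ncard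
      ≤ #{e ∈ S.sym2 | x e ∈ ({true} : Set Bool)} := by
  rw [← Set.ncard_coe_finset]
  refine Set.ncard_le_ncard (fun e ⟨_, heS, hx⟩ => ?_) (finite_toSet _)
  simpa [mem_sym2_iff] using ⟨heS, hx⟩

theorem dense_subset_probability_general (N k : ℕ) (p : ℝ) :
    ERMeasure N p
      {x | ∃ S : Finset (Fin N), S.card = k ∧
        2 * k ≤ {e : Sym2 (Fin N) | ¬e.IsDiag ∧ (∀ v ∈ e, v ∈ S) ∧ x e = true}.ncard}
      ≤ ENNReal.ofReal ((k * Real.exp 3 * ((N : ℝ) * p) ^ 2 / (2 * N)) ^ k) := by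
  have hcover : {x : Sym2 (Fin N) → Bool | ∃ S : Finset (Fin N), S.card = k ∧
      2 * k ≤ {e : Sym2 (Fin N) | ¬e.IsDiag ∧ (∀ v ∈ e, v ∈ S) ∧ x e = true}.ncard} ⊆
      ⋃ S ∈ (univ : Finset (Fin N)).powersetCard k,
        {x | 2 * k ≤ #{e ∈ S.sym2 | x e ∈ ({true} : Set Bool)}} := by
    rintro x ⟨S, hSk, hx⟩
    exact Set.mem_biUnion (mem_powersetCard_univ.2 hSk)
      (hx.trans (ncard_edges_within_le_card_filter_sym2 S x))
  have hS : ∀ S ∈ (univ : Finset (Fin N)).powersetCard k,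
      ERMeasure N p {x | 2 * k ≤ #{e ∈ S.sym2 | x e ∈ ({true} : Set Bool)}}
        ≤ (k ^ 2).choose (2 * k) * ENNReal.ofReal p ^ (2 * k) := fun S hS => by
    refine (measure_pi_le_card_filter_mem (bern p) {true} S.sym2 (2 * k)).trans ?_
    gcongr
    · exact (mem_powersetCard_univ.1 hS) ▸ S.card_sym2_le_sq
    · exact bern_singleton_true_le p
  calc _ ≤ ∑ S ∈ (univ : Finset (Fin N)).powersetCard k,
          ERMeasure N p {x | 2 * k ≤ #{e ∈ S.sym2 | x e ∈ ({true} : Set Bool)}} :=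
        (measure_mono hcover).trans (measure_biUnion_finset_le _ _)
    _ ≤ N.choose k * (k ^ 2).choose (2 * k) * ENNReal.ofReal p ^ (2 * k) := by
        grw [sum_le_sum hS, sum_const, card_powersetCard, card_univ, Fintype.card_fin,
          nsmul_eq_mul, mul_assoc]
    _ ≤ ENNReal.ofReal (N.choose k * (k ^ 2).choose (2 * k) * p ^ (2 * k)) := by
        rw [ENNReal.ofReal_mul (by positivity), ENNReal.ofReal_mul (by positivity),
          ENNReal.ofReal_natCast, ENNReal.ofReal_natCast]
        grw [ENNReal.ofReal_pow_le]
    _ ≤ _ := ENNReal.ofReal_le_ofReal (choose_mul_choose_sq_mul_pow_le N k p)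

/-- Lemma (dense subsets): for all `1 ≤ k ≤ N` and `p ∈ [0,1]`, the probability that
`G_{N,p}` contains a vertex set `S` with `|S| = k` spanning at least `2k` edges is at most
`(k e³ (Np)² / (2N))^k`. -/
theorem dense_subset_probability (N k : ℕ) (hk1 : 1 ≤ k) (hkN : k ≤ N)
    (p : ℝ) (hp0 : 0 ≤ p) (hp1 : p ≤ 1) :
    ERMeasure N p
      {x | ∃ S : Finset (Fin N), S.card = k ∧
        2 * k ≤ {e : Sym2 (Fin N) | ¬e.IsDiag ∧ (∀ v ∈ e, v ∈ S) ∧ x e = true}.ncard}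
      ≤ ENNReal.ofReal ((k * Real.exp 3 * ((N : ℝ) * p) ^ 2 / (2 * N)) ^ k) :=
  dense_subset_probability_general N k p

end
end

section
/- Fix an integer d ≥ 2 and let ν_d denote the volume of the d-dimensional Euclidean unit ball. For any p = p(n) ∈ (0,1], the following holds quite surely (with failure probability O(n^{−K}) for every constant K > 0): every Hamiltonian cycle of the graph 𝒳_{n,p} (if one exists) has total edge weight at least e^{−ν_d} n^{(d−1)/d} / (4 p^{1/d}). -/
open MeasureTheory Filter Real ENNReal

noncomputable section

/-- The volume of the `d`-dimensional Euclidean unit ball. -/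
def unitBallVol (d : ℕ) : ℝ :=
  (volume (Metric.ball (0 : EuclideanSpace ℝ (Fin d)) 1)).toReal

/-! If a Hamiltonian cycle costs less than `n r / 4`, where `r = e^{-ν_d} (p n)^{-1/d}`, fewer
than `n / 4` of its edges have length `≥ r`; among its first `n - 1` edges, the short ones at
indices of one parity form a matching of at least `m = ⌊3(n-1)/8⌋` edges of the graph. For a fixed
matching, the probability that all its pairs are present and of length `< r` is at most
`(ν_d r^d p)^m` (condition on one endpoint of every pair), so a union bound over the
`C(n(n+1)/2, m)` sets of `m` pairs bounds the failure probability by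
`((n+1) e ν_d e^{-dν_d} / 2m)^m ≤ (4/5)^m`, using `ν e^{-dν} ≤ 1/(2e)`. This decays faster than
any power of `n`. -/

theorem choose_mul_pow_le {N m : ℕ} (hm : 0 < m) {s : ℝ} (hs : 0 ≤ s) :
    (N.choose m : ℝ) * s ^ m ≤ (exp 1 * N * s / m) ^ m := by
  have hmR : (m : ℝ) ≠ 0 := by positivity
  have hfact : (m : ℝ) ^ m / m.factorial ≤ exp 1 ^ m := by
    rw [exp_one_pow]; exact Real.pow_div_factorial_le_exp _ (Nat.cast_nonneg m) m
  calc (N.choose m : ℝ) * s ^ m ≤ (N : ℝ) ^ m / m.factorial * s ^ m := by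
        gcongr; exact Nat.choose_le_pow_div m N
    _ = (N * s / m) ^ m * ((m : ℝ) ^ m / m.factorial) := by
        rw [div_pow, mul_pow]; field_simp
    _ ≤ (N * s / m) ^ m * exp 1 ^ m := by gcongr
    _ = (exp 1 * N * s / m) ^ m := by rw [← mul_pow]; ring

theorem two_mul_exp_one_mul_exp_neg_le {d v : ℝ} (hd : 2 ≤ d) (hv : 0 ≤ v) :
    2 * exp 1 * (v * exp (-(d * v))) ≤ 1 := by
  have h2v : 2 * v ≤ exp (2 * v - 1) := by linarith [add_one_le_exp (2 * v - 1)]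
  calc 2 * exp 1 * (v * exp (-(d * v))) ≤ 2 * v * exp 1 * exp (-(2 * v)) := by
        rw [show 2 * exp 1 * (v * exp (-(d * v))) = 2 * v * exp 1 * exp (-(d * v)) by ring]
        gcongr
    _ ≤ exp (2 * v - 1) * exp 1 * exp (-(2 * v)) := by gcongr
    _ = 1 := by rw [← exp_add, ← exp_add]; simp

theorem exists_le_ofReal_mul_rpow_neg_of_le_geometric {μ : ℕ → ℝ≥0∞} {ρ : ℝ} (hρ0 : 0 ≤ ρ)
    (hρ1 : ρ < 1) (hμ1 : ∀ n, μ n ≤ 1) (hμ : ∀ᶠ n in atTop, μ n ≤ ENNReal.ofReal (ρ ^ n)) {K : ℝ}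
    (hK : 0 ≤ K) :
    ∃ c : ℝ, 0 < c ∧ ∀ n : ℕ, 1 ≤ n → μ n ≤ ENNReal.ofReal (c * (n : ℝ) ^ (-K)) := by
  obtain ⟨N, hN⟩ := eventually_atTop.1 <| hμ.and <|
    (tendsto_pow_const_mul_const_pow_of_lt_one ⌈K⌉₊ hρ0 hρ1).eventually_le_const zero_lt_one
  refine ⟨max 1 ((N : ℝ) ^ K), by positivity, fun n hn => ?_⟩
  have hn0 : (0 : ℝ) < n := by exact_mod_cast hn
  have hnK : (0 : ℝ) < (n : ℝ) ^ (-K) := rpow_pos_of_pos hn0 _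
  rcases le_or_gt N n with hNn | hnN
  · obtain ⟨hμn, hpoly⟩ := hN n hNn
    refine hμn.trans (ENNReal.ofReal_le_ofReal ?_)
    have hceil : (n : ℝ) ^ K ≤ (n : ℝ) ^ ⌈K⌉₊ := by
      rw [← Real.rpow_natCast]
      exact rpow_le_rpow_of_exponent_le (by exact_mod_cast hn) (Nat.le_ceil K)
    have : ρ ^ n * (n : ℝ) ^ K ≤ 1 := by nlinarith [pow_nonneg hρ0 n]
    calc ρ ^ n ≤ (n : ℝ) ^ (-K) := by
          rwa [rpow_neg hn0.le, ← one_div, le_div_iff₀ (rpow_pos_of_pos hn0 K)]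
      _ ≤ _ := le_mul_of_one_le_left hnK.le (le_max_left _ _)
  · refine (hμ1 n).trans ?_
    rw [← ENNReal.ofReal_one]
    refine ENNReal.ofReal_le_ofReal ?_
    calc (1 : ℝ) = (n : ℝ) ^ K * (n : ℝ) ^ (-K) := by rw [← rpow_add hn0]; simp
      _ ≤ (N : ℝ) ^ K * (n : ℝ) ^ (-K) := by gcongr
      _ ≤ _ := by gcongr; exact le_max_right _ _

theorem four_fifths_pow_le {n : ℕ} (hn : 5 ≤ n) :
    (4 / 5 : ℝ) ^ (3 * (n - 1) / 8) ≤ ((4 / 5 : ℝ) ^ (1 / 8 : ℝ)) ^ n := by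
  rw [← Real.rpow_natCast, ← Real.rpow_natCast, ← Real.rpow_mul (by norm_num)]
  refine Real.rpow_le_rpow_of_exponent_ge (by norm_num) (by norm_num) ?_
  have : (n : ℝ) ≤ 8 * (3 * (n - 1) / 8 : ℕ) := by exact_mod_cast (by omega)
  linarith

theorem mul_card_filter_le_sum {ι : Type*} (s : Finset ι) {f : ι → ℝ} (hf : ∀ i ∈ s, 0 ≤ f i)
    (r : ℝ) : r * (s.filter fun i => r ≤ f i).card ≤ ∑ i ∈ s, f i := by
  calc r * (s.filter fun i => r ≤ f i).card ≤ ∑ i ∈ s.filter (fun i => r ≤ f i), f i := by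
        rw [mul_comm, ← nsmul_eq_mul]
        exact Finset.card_nsmul_le_sum _ _ _ fun i hi => (Finset.mem_filter.1 hi).2
    _ ≤ ∑ i ∈ s, f i :=
        Finset.sum_le_sum_of_subset_of_nonneg (Finset.filter_subset _ _) fun i hi _ => hf i hi

theorem exists_large_subset_same_parity (S : Finset ℕ) :
    ∃ T ⊆ S, S.card ≤ 2 * T.card ∧ ∀ i ∈ T, ∀ j ∈ T, i % 2 = j % 2 := by
  have hsplit := Finset.card_filter_add_card_filter_not (s := S) (fun i => i % 2 = 0)
  rcases le_total (S.filter fun i => ¬ i % 2 = 0).card (S.filter fun i => i % 2 = 0).card with h | h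
  · refine ⟨S.filter fun i => i % 2 = 0, Finset.filter_subset _ S, by omega, fun i hi j hj => ?_⟩
    rw [(Finset.mem_filter.1 hi).2, (Finset.mem_filter.1 hj).2]
  · refine ⟨S.filter fun i => ¬ i % 2 = 0, Finset.filter_subset _ S, by omega,
      fun i hi j hj => ?_⟩
    rw [Nat.mod_two_ne_zero.1 (Finset.mem_filter.1 hi).2,
      Nat.mod_two_ne_zero.1 (Finset.mem_filter.1 hj).2]

def IsMatching {V : Type*} (M : Finset (Sym2 V)) : Prop :=
  (∀ z ∈ M, ¬ z.IsDiag) ∧ ∀ z ∈ M, ∀ z' ∈ M, ∀ v ∈ z, v ∈ z' → z = z'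

namespace SimpleGraph.Walk

variable {V : Type*} {G : SimpleGraph V} {u v : V}

theorem walkCost_eq_sum_range (w : Sym2 V → ℝ) (p : G.Walk u v) :
    walkCost w p = ∑ i ∈ Finset.range p.length, w s(p.getVert i, p.getVert (i + 1)) := by
  induction p with
  | nil => simp [walkCost]
  | cons h q ih =>
    simp only [walkCost] at ih ⊢
    rw [length_cons, Finset.sum_range_succ', add_comm]
    simp [ih, getVert_cons_succ]

theorem IsCycle.isMatching_image_getVert [DecidableEq V] {c : G.Walk v v} (hc : c.IsCycle)
    {T : Finset ℕ} (hT : ∀ i ∈ T, i + 1 < c.length)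
    (hpar : ∀ i ∈ T, ∀ j ∈ T, i % 2 = j % 2) :
    IsMatching (T.image fun i => s(c.getVert i, c.getVert (i + 1))) ∧
      (T.image fun i => s(c.getVert i, c.getVert (i + 1))).card = T.card := by
  have hinj : ∀ i ∈ T, ∀ j ∈ T, ∀ a b, a ≤ 1 → b ≤ 1 → c.getVert (i + a) = c.getVert (j + b) →
      i + a = j + b := fun i hi j hj a b ha hb h =>
    hc.getVert_injOn' (by simp only [Set.mem_ofPred_eq]; have := hT i hi; omega)
      (by simp only [Set.mem_ofPred_eq]; have := hT j hj; omega) h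
  refine ⟨⟨?_, ?_⟩, Finset.card_image_of_injOn ?_⟩
  · simp only [Finset.mem_image, forall_exists_index, and_imp]
    rintro _ i hi rfl hdiag
    have := hinj i hi i hi 0 1 (by omega) le_rfl (Sym2.mk_isDiag_iff.1 hdiag)
    omega
  · simp only [Finset.mem_image, forall_exists_index, and_imp]
    rintro _ i hi rfl _ j hj rfl x hxi hxj
    have hmem : ∀ k, x ∈ s(c.getVert k, c.getVert (k + 1)) → ∃ a ≤ 1, c.getVert (k + a) = x :=
      fun k hx => (Sym2.mem_iff.1 hx).elim (fun h => ⟨0, zero_le_one, h.symm⟩)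
        fun h => ⟨1, le_rfl, h.symm⟩
    obtain ⟨a, ha, hia⟩ := hmem i hxi
    obtain ⟨b, hb, hjb⟩ := hmem j hxj
    have := hinj i hi j hj a b ha hb (hia.trans hjb.symm)
    have := hpar i hi j hj
    obtain rfl : i = j := by omega
    rfl
  · intro i hi j hj h
    rcases Sym2.eq_iff.1 h with ⟨h0, -⟩ | ⟨h0, h1⟩
    · simpa using hinj i hi j hj 0 0 (by omega) (by omega) (by simpa using h0)
    · have := hinj i hi j hj 0 1 (by omega) (by omega) (by simpa using h0)
      have := hinj i hi j hj 1 0 (by omega) (by omega) (by simpa using h1)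
      omega

open Finset in
theorem IsHamiltonianCycle.exists_isMatching_of_walkCost_lt [Fintype V] [DecidableEq V]
    {w : Sym2 V → ℝ} (hw : ∀ z, 0 ≤ w z) {r : ℝ} {c : G.Walk v v} (hc : c.IsHamiltonianCycle)
    (hcost : walkCost w c < Fintype.card V * r / 4) :
    ∃ M : Finset (Sym2 V), M.card = 3 * (Fintype.card V - 1) / 8 ∧ IsMatching M ∧
      ∀ z ∈ M, w z < r ∧ z ∈ G.edgeSet := by
  set n := Fintype.card V
  set edge : ℕ → Sym2 V := fun i => s(c.getVert i, c.getVert (i + 1))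
  have hlen : c.length = n := hc.length_eq
  set long := (range n).filter fun i => r ≤ w (edge i)
  set short := (range (n - 1)).filter fun i => w (edge i) < r
  have hcost' : ∑ i ∈ range n, w (edge i) < n * r / 4 := by
    simpa only [walkCost_eq_sum_range, hlen] using hcost
  have hlong : 4 * long.card < n := by
    have hsum := mul_card_filter_le_sum (range n) (fun i _ => hw (edge i)) r
    have hr : 0 < r := by
      by_contra! hr
      have := mul_nonpos_of_nonneg_of_nonpos (Nat.cast_nonneg n) hr
      linarith [sum_nonneg fun i (_ : i ∈ range n) => hw (edge i)]
    have : (4 * long.card : ℝ) < n := by nlinarith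
    exact_mod_cast this
  have hshort : n - 1 ≤ short.card + long.card := by
    have hsplit : short.card + ((range (n - 1)).filter fun i => ¬ w (edge i) < r).card = n - 1 := by
      rw [card_filter_add_card_filter_not, card_range]
    have hsub : ((range (n - 1)).filter fun i => ¬ w (edge i) < r) ⊆ long := fun i hi => by
      simp only [mem_filter, mem_range, not_lt, long] at hi ⊢
      exact ⟨by omega, hi.2⟩
    have := card_le_card hsub
    omega
  obtain ⟨T₀, hT₀, hcard₀, hpar₀⟩ := exists_large_subset_same_parity short
  obtain ⟨T, hT, hcard⟩ := exists_subset_card_eq (s := T₀) (n := 3 * (n - 1) / 8) (by omega)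
  have hTshort : ∀ i ∈ T, i + 1 < n ∧ w (edge i) < r := fun i hi => by
    have := mem_filter.1 (hT₀ (hT hi))
    rw [mem_range] at this
    exact ⟨by omega, this.2⟩
  obtain ⟨hM, hMcard⟩ := hc.isCycle.isMatching_image_getVert (T := T)
    (fun i hi => hlen ▸ (hTshort i hi).1) fun i hi j hj => hpar₀ i (hT hi) j (hT hj)
  refine ⟨T.image edge, hMcard.trans hcard, hM, ?_⟩
  simp only [mem_image, forall_exists_index, and_imp]
  rintro _ i hi rfl
  have := hTshort i hi
  exact ⟨this.2, c.adj_getVert_succ (by omega)⟩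

end SimpleGraph.Walk

theorem eucDist_eq_dist {d : ℕ} (x y : Fin d → ℝ) :
    eucDist x y = dist (WithLp.toLp 2 x) (WithLp.toLp 2 y) := by
  simp [eucDist, EuclideanSpace.dist_eq, Real.dist_eq, sq_abs]

theorem unitBallVol_nonneg (d : ℕ) : 0 ≤ unitBallVol d := ENNReal.toReal_nonneg

theorem volume_setOf_eucDist_lt {d : ℕ} (c : Fin d → ℝ) {r : ℝ} (hr : 0 < r) :
    volume {x | eucDist x c < r} = ENNReal.ofReal (unitBallVol d * r ^ d) := by
  have hball : {x | eucDist x c < r} = WithLp.toLp 2 ⁻¹' Metric.ball (WithLp.toLp 2 c) r := by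
    ext x; simp [eucDist_eq_dist]
  rw [hball, (PiLp.volume_preserving_toLp (Fin d)).measure_preimage
    measurableSet_ball.nullMeasurableSet, Measure.addHaar_ball_of_pos _ _ hr,
    finrank_euclideanSpace_fin, unitBallVol, ENNReal.ofReal_mul (by positivity),
    ENNReal.ofReal_toReal measure_ball_lt_top.ne, mul_comm]

theorem unifCube_setOf_eucDist_lt_le {d : ℕ} (c : Fin d → ℝ) {r : ℝ} (hr : 0 < r) :
    unifCube d {x | eucDist x c < r} ≤ ENNReal.ofReal (unitBallVol d * r ^ d) :=
  (Measure.restrict_apply_le _ _).trans (volume_setOf_eucDist_lt c hr).le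

theorem continuous_pairWeight {V : Type*} {d : ℕ} (z : Sym2 V) :
    Continuous fun X : V → Fin d → ℝ => pairWeight X z := by
  induction z using Sym2.ind with
  | h a b =>
    simp only [pairWeight, Sym2.lift_mk, eucDist_eq_dist]
    fun_prop

/-- Fubini over the coordinates outside `A`: the section of `E` over given outer coordinates lies
in the box `∏_{i ∈ A} t y i`, for any `y` with these outer coordinates. -/
theorem measure_pi_le_pow_card {ι α : Type*} [Fintype ι] [DecidableEq ι] [MeasurableSpace α]
    (μ : ι → Measure α) [∀ i, IsProbabilityMeasure (μ i)] (A : Finset ι) {E : Set (ι → α)}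
    (hE : MeasurableSet E) (t : (ι → α) → ι → Set α) {q : ℝ≥0∞}
    (ht : ∀ y, ∀ i ∈ A, μ i (t y i) ≤ q)
    (hEt : ∀ x ∈ E, ∀ y, (∀ i ∉ A, x i = y i) → ∀ i ∈ A, x i ∈ t y i) :
    Measure.pi μ E ≤ q ^ A.card := by
  let φ := MeasurableEquiv.piEquivPiSubtypeProd (fun _ : ι => α) (· ∈ A)
  have hφ := measurePreserving_piEquivPiSubtypeProd μ (· ∈ A)
  rw [← (hφ.symm φ).measure_preimage hE.nullMeasurableSet,
    Measure.prod_apply_symm (φ.symm.measurable hE)]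
  refine (lintegral_mono fun Y => ?_).trans_eq (by rw [lintegral_const, measure_univ, mul_one])
  rcases Set.eq_empty_or_nonempty ((fun u => (u, Y)) ⁻¹' (φ.symm ⁻¹' E)) with hS | ⟨u₀, -⟩
  · simp [hS]
  have hφsymm : ∀ u j, φ.symm (u, Y) j = if h : j ∈ A then u ⟨j, h⟩ else Y ⟨j, h⟩ :=
    fun _ _ => rfl
  have hsub : (fun u => (u, Y)) ⁻¹' (φ.symm ⁻¹' E) ⊆
      Set.univ.pi fun i : {i // i ∈ A} => t (φ.symm (u₀, Y)) i := fun u hu i _ => by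
    have := hEt _ hu (φ.symm (u₀, Y)) (fun j hj => by simp only [hφsymm, dif_neg hj]) i i.2
    simpa [hφsymm] using this
  refine (measure_mono hsub).trans ?_
  rw [@Measure.pi_pi _ _ (Subtype.fintype _)]
  refine (Finset.prod_le_pow_card _ _ q fun (i : {i // i ∈ A}) _ => ht _ i i.2).trans_eq ?_
  rw [@Finset.card_univ _ (Subtype.fintype _), Fintype.card_coe]

theorem Sym2.mk_out_fst_out_snd {V : Type*} (z : Sym2 V) : s(z.out.1, z.out.2) = z :=
  Quot.out_eq z

/-- Orient each pair by `Sym2.out`. The first endpoints are distinct and never second endpoints,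
so once all other points are fixed, each first endpoint must fall in a ball of radius `r`. -/
theorem measure_pi_unifCube_isMatching_le {V : Type*} [Fintype V] [DecidableEq V] {d : ℕ}
    {r : ℝ} (hr : 0 < r) {M : Finset (Sym2 V)} (hM : IsMatching M) :
    Measure.pi (fun _ : V => unifCube d) {X | ∀ z ∈ M, pairWeight X z < r} ≤
      ENNReal.ofReal (unitBallVol d * r ^ d) ^ M.card := by
  set A := M.image fun z => z.out.1
  have hA : A.card = M.card := Finset.card_image_of_injOn fun z hz z' hz' h =>
    hM.2 z hz z' hz' _ z.out_fst_mem (h ▸ z'.out_fst_mem)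
  have hsnd : ∀ z ∈ M, z.out.2 ∉ A := by
    intro z hz h
    obtain ⟨z', hz', h'⟩ := Finset.mem_image.1 h
    obtain rfl := hM.2 z' hz' z hz _ z'.out_fst_mem (h' ▸ z.out_snd_mem)
    exact hM.1 z' hz (by rw [← z'.mk_out_fst_out_snd, Sym2.mk_isDiag_iff, h'])
  have hE : IsOpen {X : V → Fin d → ℝ | ∀ z ∈ M, pairWeight X z < r} := by
    simp only [Set.ofPred_forall]
    exact isOpen_biInter_finset fun z _ => isOpen_lt (continuous_pairWeight z) continuous_const
  rw [← hA]
  refine measure_pi_le_pow_card _ A hE.measurableSet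
    (fun y i => {v | ∀ z ∈ M, z.out.1 = i → eucDist v (y z.out.2) < r}) (fun y i hi => ?_)
    (fun X hX y hXy i _ z hz hzi => ?_)
  · obtain ⟨z, hz, rfl⟩ := Finset.mem_image.1 hi
    have hsub : {v | ∀ z' ∈ M, z'.out.1 = z.out.1 → eucDist v (y z'.out.2) < r} ⊆
        {v | eucDist v (y z.out.2) < r} := fun v hv => hv z hz rfl
    exact (measure_mono hsub).trans (unifCube_setOf_eucDist_lt_le _ hr)
  · have := hX z hz
    rw [← z.mk_out_fst_out_snd] at this
    rw [← hzi, ← hXy _ (hsnd z hz)]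
    exact this

theorem bern_singleton_true {p : ℝ} (hp : p ≤ 1) : bern p {true} = ENNReal.ofReal p := by
  rw [bern, PMF.toMeasure_apply_singleton _ _ (measurableSet_singleton _)]
  simp [min_eq_left (Real.toNNReal_le_one.2 hp), ENNReal.ofReal]
  rfl

theorem measure_pi_bern_forall_eq_true {ι : Type*} [Fintype ι] {p : ℝ} (hp : p ≤ 1)
    (M : Finset ι) :
    Measure.pi (fun _ : ι => bern p) {e | ∀ i ∈ M, e i = true} = ENNReal.ofReal p ^ M.card := by
  classical
  have hset : {e : ι → Bool | ∀ i ∈ M, e i = true} =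
      Set.univ.pi fun i => if i ∈ M then {true} else Set.univ := by
    ext e
    simp only [Set.mem_ofPred_eq, Set.mem_univ_pi]
    refine ⟨fun h i => ?_, fun h i hi => by simpa [hi] using h i⟩
    split_ifs with hi
    exacts [h i hi, Set.mem_univ _]
  rw [hset, Measure.pi_pi]
  simp only [apply_ite, bern_singleton_true hp, measure_univ]
  rw [Finset.prod_ite_mem, Finset.univ_inter, Finset.prod_const]

theorem XMeasure_isMatching_le {d n : ℕ} {p r : ℝ} (hp : p ≤ 1) (hr : 0 < r)
    {M : Finset (Sym2 (Fin n))} (hM : IsMatching M) :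
    XMeasure d n p {x | ∀ z ∈ M, pairWeight x.1 z < r ∧ x.2 z = true} ≤
      ENNReal.ofReal (unitBallVol d * r ^ d * p) ^ M.card := by
  have hset : {x : (Fin n → Fin d → ℝ) × (Sym2 (Fin n) → Bool) |
      ∀ z ∈ M, pairWeight x.1 z < r ∧ x.2 z = true} =
      {X | ∀ z ∈ M, pairWeight X z < r} ×ˢ {e | ∀ z ∈ M, e z = true} := by
    ext x
    simp only [Set.mem_ofPred_eq, Set.mem_prod]
    exact ⟨fun h => ⟨fun z hz => (h z hz).1, fun z hz => (h z hz).2⟩,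
      fun h z hz => ⟨h.1 z hz, h.2 z hz⟩⟩
  rw [hset, XMeasure, Measure.prod_prod, measure_pi_bern_forall_eq_true hp,
    ENNReal.ofReal_mul (by have := unitBallVol_nonneg d; positivity), mul_pow]
  gcongr
  exact measure_pi_unifCube_isMatching_le hr hM

theorem pairWeight_nonneg {V : Type*} {d : ℕ} (X : V → Fin d → ℝ) (z : Sym2 V) :
    0 ≤ pairWeight X z :=
  z.inductionOn fun _ _ => Real.sqrt_nonneg _

theorem mem_edgeSet_graphOf {V : Type*} {e : Sym2 V → Bool} {z : Sym2 V} :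
    z ∈ (graphOf e).edgeSet ↔ ¬ z.IsDiag ∧ e z = true := by
  induction z using Sym2.ind with
  | h a b => simp [graphOf]

theorem two_mul_card_sym2_fin (n : ℕ) : 2 * Fintype.card (Sym2 (Fin n)) = n * (n + 1) := by
  rw [Sym2.card, Fintype.card_fin, Nat.choose_two_right, Nat.add_sub_cancel, mul_comm (n + 1)]
  exact Nat.mul_div_cancel' (Nat.even_mul_succ_self n).two_dvd

theorem XMeasure_exists_cheap_hamCycle_le {d n : ℕ} (hn : 32 ≤ n) {p r : ℝ} (hp0 : 0 ≤ p)
    (hp1 : p ≤ 1) (hr : 0 < r) (hs : 2 * exp 1 * n * (unitBallVol d * r ^ d * p) ≤ 1) :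
    XMeasure d n p {x | ∃ (v : Fin n) (c : (graphOf x.2).Walk v v), c.IsHamiltonianCycle ∧
        walkCost (pairWeight x.1) c < n * r / 4} ≤
      ENNReal.ofReal ((4 / 5) ^ (3 * (n - 1) / 8)) := by
  classical
  set m := 3 * (n - 1) / 8
  set s := unitBallVol d * r ^ d * p
  set N := Fintype.card (Sym2 (Fin n))
  have hs0 : 0 ≤ s := by have := unitBallVol_nonneg d; positivity
  set 𝓜 := (Finset.univ.powersetCard m).filter fun M : Finset (Sym2 (Fin n)) => IsMatching M
  have hsub : {x : (Fin n → Fin d → ℝ) × (Sym2 (Fin n) → Bool) |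
      ∃ (v : Fin n) (c : (graphOf x.2).Walk v v), c.IsHamiltonianCycle ∧
        walkCost (pairWeight x.1) c < n * r / 4} ⊆
      ⋃ M ∈ 𝓜, {x | ∀ z ∈ M, pairWeight x.1 z < r ∧ x.2 z = true} := by
    rintro x ⟨v, c, hc, hcost⟩
    obtain ⟨M, hMcard, hM, hMshort⟩ :=
      hc.exists_isMatching_of_walkCost_lt (pairWeight_nonneg x.1) (by simpa using hcost)
    refine Set.mem_biUnion (Finset.mem_filter.2 ⟨Finset.mem_powersetCard.2
      ⟨Finset.subset_univ M, by simpa using hMcard⟩, hM⟩) fun z hz => ?_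
    exact ⟨(hMshort z hz).1, (mem_edgeSet_graphOf.1 (hMshort z hz).2).2⟩
  have hcount : (N.choose m : ℝ) * s ^ m ≤ (4 / 5) ^ m := by
    have hnR : (0 : ℝ) < n := by exact_mod_cast (by omega : 0 < n)
    have hm : (5 * (n + 1) : ℝ) ≤ 16 * m := by exact_mod_cast (by omega : 5 * (n + 1) ≤ 16 * m)
    have hN : (2 * N : ℝ) = n * (n + 1) := by exact_mod_cast two_mul_card_sym2_fin n
    refine (choose_mul_pow_le (by omega) hs0).trans (pow_le_pow_left₀ (by positivity) ?_ m)
    -- `e N s / m ≤ (n + 1) / (4 m) ≤ 4 / 5`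
    rw [div_le_iff₀ (by exact_mod_cast (by omega : 0 < m))]
    have : exp 1 * N * s * (4 * n) ≤ n * (n + 1) := by nlinarith
    nlinarith
  calc _ ≤ _ := measure_mono hsub
    _ ≤ ∑ M ∈ 𝓜, XMeasure d n p {x | ∀ z ∈ M, pairWeight x.1 z < r ∧ x.2 z = true} :=
        measure_biUnion_finset_le _ _
    _ ≤ ∑ M ∈ Finset.univ.powersetCard m, ENNReal.ofReal s ^ m := by
        refine (Finset.sum_le_sum fun M hM => ?_).trans
          (Finset.sum_le_sum_of_subset (Finset.filter_subset _ _))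
        obtain ⟨hMcard, hM⟩ := Finset.mem_filter.1 hM
        rw [← (Finset.mem_powersetCard.1 hMcard).2]
        exact XMeasure_isMatching_le hp1 hr hM
    _ = ENNReal.ofReal (N.choose m * s ^ m) := by
        rw [ENNReal.ofReal_mul (Nat.cast_nonneg _), ENNReal.ofReal_natCast,
          ENNReal.ofReal_pow hs0, Finset.sum_const, Finset.card_powersetCard, Finset.card_univ,
          nsmul_eq_mul]
    _ ≤ _ := ENNReal.ofReal_le_ofReal hcount

/-- Chosen so that `n r / 4` is the threshold of the theorem; then `ν_d r^d p n = ν_d e^{-dν_d}`. -/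
def shortEdgeRadius (d : ℕ) (p n : ℝ) : ℝ :=
  exp (-unitBallVol d) / (p * n) ^ (1 / (d : ℝ))

section shortEdgeRadius

variable {d : ℕ} {p n : ℝ}

theorem shortEdgeRadius_pos (hp : 0 < p) (hn : 0 < n) : 0 < shortEdgeRadius d p n := by
  unfold shortEdgeRadius; positivity

theorem mul_shortEdgeRadius_div_four (hd : d ≠ 0) (hp : 0 < p) (hn : 0 < n) :
    n * shortEdgeRadius d p n / 4 =
      exp (-unitBallVol d) * n ^ ((d - 1 : ℝ) / d) / (4 * p ^ (1 / (d : ℝ))) := by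
  have hsplit : n ^ ((d - 1 : ℝ) / d) * n ^ (1 / (d : ℝ)) = n := by
    rw [← rpow_add hn, ← add_div, sub_add_cancel, div_self (by exact_mod_cast hd), Real.rpow_one]
  rw [shortEdgeRadius, mul_rpow hp.le hn.le]
  have := rpow_pos_of_pos hp (1 / (d : ℝ))
  have := rpow_pos_of_pos hn (1 / (d : ℝ))
  field_simp
  linear_combination -hsplit

theorem two_mul_exp_one_mul_shortEdgeRadius_le (hd : 2 ≤ d) (hp : 0 < p) (hn : 0 < n) :
    2 * exp 1 * n * (unitBallVol d * shortEdgeRadius d p n ^ d * p) ≤ 1 := by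
  have hpow : shortEdgeRadius d p n ^ d = exp (-(d * unitBallVol d)) / (p * n) := by
    rw [shortEdgeRadius, div_pow, one_div, Real.rpow_inv_natCast_pow (by positivity) (by omega),
      ← exp_nat_mul, mul_neg]
  rw [hpow]
  convert two_mul_exp_one_mul_exp_neg_le (d := d) (by exact_mod_cast hd) (unitBallVol_nonneg d)
    using 1
  field_simp

end shortEdgeRadius

/-- Quite surely, every Hamiltonian cycle of `𝒳_{n,p}` (if one exists) has total weight at
least `e^{−ν_d} n^{(d−1)/d} / (4 p^{1/d})`. -/
theorem tsp_lower_bound_qs (d : ℕ) (hd : 2 ≤ d) (p : ℕ → ℝ)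
    (hp : ∀ n, 0 < p n ∧ p n ≤ 1) :
    ∀ K : ℝ, 0 < K → ∃ c : ℝ, 0 < c ∧ ∀ n : ℕ, 1 ≤ n →
      XMeasure d n (p n)
        {x | ¬ ∀ (v : Fin n) (cyc : (graphOf x.2).Walk v v), cyc.IsHamiltonianCycle →
          Real.exp (-unitBallVol d) * (n : ℝ) ^ ((d - 1 : ℝ) / d) /
              (4 * (p n) ^ (1 / (d : ℝ))) ≤
            walkCost (pairWeight x.1) cyc}
        ≤ ENNReal.ofReal (c * (n : ℝ) ^ (-K)) := by
  intro K hK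
  refine exists_le_ofReal_mul_rpow_neg_of_le_geometric (ρ := (4 / 5 : ℝ) ^ (1 / 8 : ℝ))
    (by positivity) (rpow_lt_one (by norm_num) (by norm_num) (by norm_num))
    (fun n => prob_le_one) ?_ hK.le
  filter_upwards [eventually_ge_atTop 32] with n hn
  obtain ⟨hp0, hp1⟩ := hp n
  have hn0 : (0 : ℝ) < n := by exact_mod_cast (by omega : 0 < n)
  refine (measure_mono fun x hx => ?_).trans <|
    (XMeasure_exists_cheap_hamCycle_le hn hp0.le hp1 (shortEdgeRadius_pos hp0 hn0)
      (two_mul_exp_one_mul_shortEdgeRadius_le hd hp0 hn0)).trans <|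
    ENNReal.ofReal_le_ofReal (four_fifths_pow_le (by omega))
  push Not at hx
  rwa [Set.mem_ofPred_eq, mul_shortEdgeRadius_div_four (by omega) hp0 hn0]

end
end

section
/- Let q = q(n) ∈ (0,1) satisfy nq / log n → ∞ as n → ∞. Then for every constant K > 0, the probability that the Erdős–Rényi random graph G_{n,q} contains a vertex set S with 1 ≤ |S| ≤ 1/(100q) whose external neighborhood satisfies |N(S)| < |S| n q / 100 is O(n^{−K}). -/
/-!
Fix `S` with `|S| = s ≤ 1/(100q)`. For `v ∉ S` let `A_v` be the event that `v` has no neighbour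
in `S`. For any `T ⊆ Sᶜ` the intersection of the `A_v`, `v ∈ T`, is the absence of the `s·|T|`
edges between `S` and `T`, so these events are independent, each of probability
`ρ = (1-q)^s`. The exponential-moment bound with base `1/100` then gives
`P(|N(S)| < snq/100) ≤ 100^(snq/100) (ρ·99/100 + 1/100)^(n-s) ≤ e^(-snq/2)`.
Once `nq ≥ 2(K+3) log n`, a union bound over the at most `n^s` sets of each size `s ≥ 1`
gives `O(n^(-K))`.
-/

open MeasureTheory Filter Real ENNReal

noncomputable section

open Finset

section LowerTail

variable {Ω ι : Type*} {A : ι → Set Ω}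

open scoped Classical in
lemma prod_ite_mem_eq_sum_powerset (V : Finset ι) (a : ℝ) (x : Ω) :
    ∏ v ∈ V, (if x ∈ A v then 1 else a) =
      ∑ T ∈ V.powerset, ((1 - a) ^ #T * a ^ #(V \ T)) * (⋂ v ∈ T, A v).indicator 1 x := by
  have hsplit : ∀ v, (if x ∈ A v then (1 : ℝ) else a) = (1 - a) * (A v).indicator 1 x + a := by
    intro v
    by_cases hx : x ∈ A v <;> simp [hx]
  simp_rw [hsplit, prod_add, prod_mul_distrib, prod_const]
  refine sum_congr rfl fun T _ => ?_
  simp only [Set.indicator_apply, Set.mem_iInter₂, Pi.one_apply, prod_boole]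
  ring

variable [MeasurableSpace Ω] {μ : Measure Ω} [IsFiniteMeasure μ]

open scoped Classical in
lemma integrable_prod_ite_mem (V : Finset ι) (a : ℝ) (hA : ∀ v ∈ V, MeasurableSet (A v)) :
    Integrable (fun x => ∏ v ∈ V, if x ∈ A v then 1 else a) μ := by
  simp_rw [prod_ite_mem_eq_sum_powerset]
  exact integrable_finsetSum _ fun T hT => ((integrable_const 1).indicator
    (T.measurableSet_biInter fun v hv => hA v (mem_powerset.1 hT hv))).const_mul _

open scoped Classical in
lemma integral_prod_ite_mem (V : Finset ι) (a ρ : ℝ)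
    (hA : ∀ v ∈ V, MeasurableSet (A v)) (hρ : ∀ T ⊆ V, μ.real (⋂ v ∈ T, A v) = ρ ^ #T) :
    ∫ x, ∏ v ∈ V, (if x ∈ A v then 1 else a) ∂μ = ((1 - a) * ρ + a) ^ #V := by
  have hmeas : ∀ T ∈ V.powerset, MeasurableSet (⋂ v ∈ T, A v) := fun T hT =>
    T.measurableSet_biInter fun v hv => hA v (mem_powerset.1 hT hv)
  simp_rw [prod_ite_mem_eq_sum_powerset]
  rw [integral_finsetSum _ fun T hT => ((integrable_const 1).indicator (hmeas T hT)).const_mul _,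
    ← prod_const, prod_add]
  refine sum_congr rfl fun T hT => ?_
  rw [integral_const_mul, integral_indicator_one (hmeas T hT), hρ T (mem_powerset.1 hT),
    prod_const, prod_const, mul_pow]
  ring

open scoped Classical in
theorem measureReal_card_filter_notMem_lt_le (V : Finset ι) {a : ℝ} (ha0 : 0 < a) (ha1 : a ≤ 1)
    (ρ m : ℝ) (hA : ∀ v ∈ V, MeasurableSet (A v))
    (hρ : ∀ T ⊆ V, μ.real (⋂ v ∈ T, A v) = ρ ^ #T) :
    μ.real {x | (#{v ∈ V | x ∉ A v} : ℝ) < m} ≤ a ^ (-m) * ((1 - a) * ρ + a) ^ #V := by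
  set f : Ω → ℝ := fun x => ∏ v ∈ V, if x ∈ A v then 1 else a with hf
  have hf_eq : ∀ x, f x = a ^ #{v ∈ V | x ∉ A v} := by
    intro x
    simp only [hf, prod_ite, prod_const_one, prod_const, one_mul]
  have hsub : {x | (#{v ∈ V | x ∉ A v} : ℝ) < m} ⊆ {x | a ^ m ≤ f x} := by
    intro x hx
    rw [Set.mem_ofPred_eq, hf_eq, ← Real.rpow_natCast]
    exact Real.rpow_le_rpow_of_exponent_ge ha0 ha1 (le_of_lt hx)
  have hmarkov := mul_meas_ge_le_integral_of_nonneg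
    (Eventually.of_forall fun x => (hf_eq x ▸ pow_nonneg ha0.le _ : 0 ≤ f x))
    (integrable_prod_ite_mem (μ := μ) V a hA) (a ^ m)
  rw [integral_prod_ite_mem V a ρ hA hρ] at hmarkov
  calc μ.real {x | (#{v ∈ V | x ∉ A v} : ℝ) < m}
      ≤ μ.real {x | a ^ m ≤ f x} := measureReal_mono hsub
    _ = a ^ (-m) * (a ^ m * μ.real {x | a ^ m ≤ f x}) := by
      rw [← mul_assoc, ← Real.rpow_add ha0, neg_add_cancel, Real.rpow_zero, one_mul]
    _ ≤ a ^ (-m) * ((1 - a) * ρ + a) ^ #V := by gcongr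

end LowerTail

lemma bern_singleton_false {q : ℝ} (hq0 : 0 ≤ q) (hq1 : q ≤ 1) :
    bern q {false} = ENNReal.ofReal (1 - q) := by
  have hmin : min (Real.toNNReal q) 1 = Real.toNNReal q := min_eq_left (Real.toNNReal_le_one.2 hq1)
  rw [bern, PMF.toMeasure_apply_singleton _ _ (measurableSet_singleton false), PMF.bernoulli,
    PMF.ofFintype_apply, hmin, cond_false, ENNReal.ofReal_sub _ hq0, ENNReal.ofReal_one]
  rfl

lemma measureReal_pi_bern_forall_eq_false {ι : Type*} [Fintype ι] {q : ℝ} (hq0 : 0 ≤ q)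
    (hq1 : q ≤ 1) (F : Finset ι) :
    (Measure.pi fun _ : ι => bern q).real {x | ∀ e ∈ F, x e = false} = (1 - q) ^ #F := by
  classical
  have hcyl : {x : ι → Bool | ∀ e ∈ F, x e = false} =
      Set.univ.pi fun e => if e ∈ F then {false} else Set.univ := by
    ext x
    simp only [Set.mem_ofPred_eq, Set.mem_univ_pi]
    refine forall_congr' fun e => ?_
    split_ifs with he <;> simp [he]
  rw [measureReal_def, hcyl, Measure.pi_pi]
  simp only [apply_ite (bern q), bern_singleton_false hq0 hq1, measure_univ]
  rw [prod_ite_mem, univ_inter, prod_const, ENNReal.toReal_pow,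
    ENNReal.toReal_ofReal (by linarith)]

section ExternalNeighborhood

variable {V : Type*} [DecidableEq V]

def noEdgeTo (S : Finset V) (v : V) : Set (Sym2 V → Bool) := {x | ∀ u ∈ S, x s(u, v) = false}

open scoped Classical in
lemma ncard_externalNeighborhood [Fintype V] (x : Sym2 V → Bool) (S : Finset V) :
    {v | v ∉ S ∧ ∃ u ∈ S, (graphOf x).Adj u v}.ncard = #{v ∈ Sᶜ | x ∉ noEdgeTo S v} := by
  rw [← Set.ncard_coe_finset]
  congr 1
  ext v
  simp only [graphOf, noEdgeTo, coe_filter, mem_compl, Set.mem_ofPred_eq, not_forall,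
    Bool.not_eq_false, exists_prop]
  exact and_congr_right fun hv =>
    ⟨fun ⟨u, hu, _, he⟩ => ⟨u, hu, he⟩, fun ⟨u, hu, he⟩ => ⟨u, hu, fun h => hv (h ▸ hu), he⟩⟩

lemma biInter_noEdgeTo (S T : Finset V) :
    ⋂ v ∈ T, noEdgeTo S v = {x | ∀ e ∈ (S ×ˢ T).image fun p => s(p.1, p.2), x e = false} := by
  ext x
  simp only [noEdgeTo, Set.mem_iInter₂, Set.mem_ofPred_eq, forall_mem_image, mem_product,
    Prod.forall]
  exact ⟨fun h u v huv => h v huv.2 u huv.1, fun h v hv u hu => h u v ⟨hu, hv⟩⟩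

lemma card_image_sym2_mk_product {S T : Finset V} (h : Disjoint S T) :
    #((S ×ˢ T).image fun p => s(p.1, p.2)) = #S * #T := by
  rw [card_image_of_injOn, card_product]
  rintro ⟨u, v⟩ huv ⟨u', v'⟩ huv' heq
  simp only [coe_product, Set.mem_prod, mem_coe] at huv huv'
  rcases Sym2.eq_iff.1 heq with ⟨rfl, rfl⟩ | ⟨rfl, rfl⟩
  · rfl
  · exact absurd huv.1 (disjoint_right.1 h huv'.2)

end ExternalNeighborhood

lemma measureReal_externalNeighborhood_lt_le {n : ℕ} {q : ℝ} (hq0 : 0 ≤ q) (hq1 : q ≤ 1)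
    (S : Finset (Fin n)) (m : ℝ) :
    (ERMeasure n q).real {x | ({v | v ∉ S ∧ ∃ u ∈ S, (graphOf x).Adj u v}.ncard : ℝ) < m}
      ≤ 100 ^ m * (99 / 100 * (1 - q) ^ #S + 1 / 100) ^ (n - #S) := by
  classical
  have hρ : ∀ T ⊆ Sᶜ, (ERMeasure n q).real (⋂ v ∈ T, noEdgeTo S v) = ((1 - q) ^ #S) ^ #T := by
    intro T hT
    rw [biInter_noEdgeTo, ERMeasure, measureReal_pi_bern_forall_eq_false hq0 hq1,
      card_image_sym2_mk_product (disjoint_of_subset_right hT disjoint_compl_right), pow_mul]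
  have h := measureReal_card_filter_notMem_lt_le (μ := ERMeasure n q) Sᶜ (a := 1 / 100)
    (by norm_num) (by norm_num) _ m (fun v _ => MeasurableSet.of_discrete) hρ
  simp_rw [ncard_externalNeighborhood]
  convert h using 2
  · norm_num [Real.rpow_neg, Real.div_rpow]
  · rw [card_compl, Fintype.card_fin]
    norm_num

lemma log_hundred_le : Real.log 100 ≤ 18 := by
  have h := Real.log_le_sub_one_of_pos (by norm_num : (0 : ℝ) < 10)
  rw [show (100 : ℝ) = 10 ^ 2 by norm_num, Real.log_pow]
  push_cast
  linarith

lemma one_add_mul_mul_one_sub_pow_le_one {q : ℝ} (hq1 : q ≤ 1) (s : ℕ) :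
    (1 + s * q) * (1 - q) ^ s ≤ 1 := by
  have hexp : (1 - q) ^ s ≤ exp (-(s * q)) := by
    calc (1 - q) ^ s ≤ exp (-q) ^ s := by
          gcongr
          linarith [add_one_le_exp (-q)]
      _ = exp (-(s * q)) := by rw [← exp_nat_mul]; ring_nf
  calc (1 + s * q) * (1 - q) ^ s ≤ exp (s * q) * exp (-(s * q)) := by
        gcongr
        linarith [add_one_le_exp (s * q)]
    _ = 1 := by rw [← exp_add, add_neg_cancel, exp_zero]

lemma rpow_mul_pow_le_exp_pow {n s : ℕ} {q : ℝ} (hq0 : 0 ≤ q) (hq1 : q ≤ 1)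
    (hsq : s * q ≤ 1 / 100) (hnq : 1 ≤ n * q) :
    (100 : ℝ) ^ (s * n * q / 100) * (99 / 100 * (1 - q) ^ s + 1 / 100) ^ (n - s)
      ≤ exp (-(n * q / 2)) ^ s := by
  set t : ℝ := s * q with ht
  have ht0 : 0 ≤ t := by positivity
  have hρ := one_add_mul_mul_one_sub_pow_le_one hq1 s
  have hc : 99 / 100 * (1 - q) ^ s + 1 / 100 ≤ exp (-(49 / 50 * t)) := by
    have : 99 / 100 * (1 - q) ^ s + 1 / 100 ≤ 1 - 49 / 50 * t := by
      nlinarith [pow_nonneg (sub_nonneg.2 hq1) s]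
    linarith [add_one_le_exp (-(49 / 50 * t))]
  have hsn : (100 * s : ℝ) ≤ n := by
    have hq : 0 < q := hq0.lt_of_ne (by rintro rfl; simp at hnq; linarith)
    nlinarith
  have hsn' : s ≤ n := by exact_mod_cast (show (s : ℝ) ≤ n by linarith)
  calc (100 : ℝ) ^ (s * n * q / 100) * (99 / 100 * (1 - q) ^ s + 1 / 100) ^ (n - s)
      ≤ exp (18 * (s * n * q / 100)) * exp (-(49 / 50 * t)) ^ (n - s) := by
        gcongr
        rw [Real.rpow_def_of_pos (by norm_num)]
        gcongr
        exact log_hundred_le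
    _ = exp (18 * (s * n * q / 100) - 49 / 50 * t * (n - s)) := by
        rw [← exp_nat_mul, ← exp_add, Nat.cast_sub hsn']; ring_nf
    _ ≤ exp (-(n * q / 2)) ^ s := by
        rw [← exp_nat_mul]
        gcongr
        nlinarith [mul_le_mul_of_nonneg_left hsn ht0]

lemma sum_filter_nonempty_pow_card_le (α : Type*) [Fintype α] {r : ℝ} (hr : 0 ≤ r)
    (hr1 : Fintype.card α * r ≤ 1) :
    ∑ S : Finset α with S.Nonempty, r ^ #S ≤ (Fintype.card α + 1) * (Fintype.card α * r) := by
  classical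
  set N := Fintype.card α
  have hsum : ∑ S : Finset α with S.Nonempty, r ^ #S =
      ∑ S ∈ (univ : Finset α).powerset, (fun j => if j = 0 then 0 else r ^ j) #S := by
    rw [sum_filter, powerset_univ]
    refine sum_congr rfl fun S _ => ?_
    simp [nonempty_iff_ne_empty]
  rw [hsum, sum_powerset_apply_card (fun j => if j = 0 then 0 else r ^ j), card_univ]
  calc ∑ j ∈ range (N + 1), N.choose j • (if j = 0 then 0 else r ^ j)
      ≤ ∑ j ∈ range (N + 1), N * r := sum_le_sum fun j _ => ?_
    _ = (N + 1) * (N * r) := by simp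
  rw [nsmul_eq_mul]
  split_ifs with hj
  · simp only [mul_zero]; positivity
  calc (N.choose j : ℝ) * r ^ j ≤ N ^ j * r ^ j := by
        gcongr; exact_mod_cast Nat.choose_le_pow N j
    _ = (N * r) ^ j := (mul_pow _ _ _).symm
    _ ≤ N * r := pow_le_of_le_one (by positivity) hr1 hj

lemma measureReal_small_set_low_expansion_le {n : ℕ} {q : ℝ} (hq0 : 0 ≤ q) (hq1 : q ≤ 1)
    (hnq : 1 ≤ n * q) (S : Finset (Fin n)) (hS : #S * q ≤ 1 / 100) :
    (ERMeasure n q).real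
      {x | ({v | v ∉ S ∧ ∃ u ∈ S, (graphOf x).Adj u v}.ncard : ℝ) < #S * n * q / 100}
      ≤ exp (-(n * q / 2)) ^ #S :=
  (measureReal_externalNeighborhood_lt_le hq0 hq1 S _).trans
    (rpow_mul_pow_le_exp_pow hq0 hq1 hS hnq)

lemma measureReal_exists_small_set_low_expansion_le {n : ℕ} {q : ℝ} (hq0 : 0 < q) (hq1 : q ≤ 1)
    (hnq : 1 ≤ n * q) (hr : n * exp (-(n * q / 2)) ≤ 1) :
    (ERMeasure n q).real {x | ∃ S : Finset (Fin n), S.Nonempty ∧ (S.card : ℝ) ≤ 1 / (100 * q) ∧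
      ({v : Fin n | v ∉ S ∧ ∃ u ∈ S, (graphOf x).Adj u v}.ncard : ℝ) <
        (S.card : ℝ) * n * q / 100} ≤ (n + 1) * (n * exp (-(n * q / 2))) := by
  set good : Finset (Finset (Fin n)) := {S | S.Nonempty ∧ (#S : ℝ) ≤ 1 / (100 * q)}
  calc _ ≤ ∑ S ∈ good, (ERMeasure n q).real
        {x | ({v | v ∉ S ∧ ∃ u ∈ S, (graphOf x).Adj u v}.ncard : ℝ) < #S * n * q / 100} :=
        (measureReal_mono (by
          rintro x ⟨S, hne, hcard, hlt⟩
          exact Set.mem_biUnion (mem_filter.2 ⟨mem_univ S, hne, hcard⟩) hlt)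
          (measure_ne_top _ _)).trans
        (measureReal_biUnion_finset_le _ _)
    _ ≤ ∑ S ∈ good, exp (-(n * q / 2)) ^ #S := sum_le_sum fun S hS =>
        measureReal_small_set_low_expansion_le hq0.le hq1 hnq S
          (by linarith [(le_div_iff₀ (by positivity)).1 (mem_filter.1 hS).2.2])
    _ ≤ ∑ S : Finset (Fin n) with S.Nonempty, exp (-(n * q / 2)) ^ #S :=
        sum_le_sum_of_subset_of_nonneg
          (fun S hS => mem_filter.2 ⟨mem_univ S, (mem_filter.1 hS).2.1⟩)
          fun _ _ _ => by positivity
    _ ≤ (n + 1) * (n * exp (-(n * q / 2))) := by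
        simpa using sum_filter_nonempty_pow_card_le (Fin n) (by positivity) (by simpa using hr)

lemma mul_exp_neg_half_le_rpow {n : ℕ} {x K : ℝ} (hn : 1 ≤ n)
    (hx : 2 * (K + 3) * Real.log n ≤ x) : n * exp (-(x / 2)) ≤ (n : ℝ) ^ (-(K + 2)) := by
  have hn0 : (0 : ℝ) < n := by exact_mod_cast hn
  calc n * exp (-(x / 2)) ≤ n ^ (1 : ℝ) * n ^ (-(K + 3)) := by
        rw [Real.rpow_one, Real.rpow_def_of_pos hn0]
        gcongr
        linarith
    _ = n ^ (-(K + 2)) := by rw [← Real.rpow_add hn0]; ring_nf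

lemma measureReal_exists_small_set_low_expansion_le_rpow {n : ℕ} {q K : ℝ} (hq0 : 0 < q)
    (hq1 : q ≤ 1) (hK : 0 ≤ K) (hn : 2 ≤ n) (hgrow : 2 * (K + 3) * Real.log n ≤ n * q) :
    (ERMeasure n q).real {x | ∃ S : Finset (Fin n), S.Nonempty ∧ (S.card : ℝ) ≤ 1 / (100 * q) ∧
      ({v : Fin n | v ∉ S ∧ ∃ u ∈ S, (graphOf x).Adj u v}.ncard : ℝ) <
        (S.card : ℝ) * n * q / 100} ≤ (n : ℝ) ^ (-K) := by
  have hn2 : (2 : ℝ) ≤ n := by exact_mod_cast hn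
  have hn0 : (0 : ℝ) < n := by positivity
  have hnq : 1 ≤ n * q := by
    nlinarith [Real.log_two_gt_d9, Real.log_le_log (by norm_num) hn2]
  have hr := mul_exp_neg_half_le_rpow (by omega) hgrow
  have hr1 : (n : ℝ) ^ (-(K + 2)) ≤ 1 :=
    Real.rpow_le_one_of_one_le_of_nonpos (by linarith) (by linarith)
  calc _ ≤ (n + 1) * (n * exp (-(n * q / 2))) :=
        measureReal_exists_small_set_low_expansion_le hq0 hq1 hnq (hr.trans hr1)
    _ ≤ n ^ (2 : ℝ) * n ^ (-(K + 2)) := by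
        rw [Real.rpow_two]
        gcongr
        nlinarith
    _ = (n : ℝ) ^ (-K) := by rw [← Real.rpow_add hn0]; ring_nf

lemma exists_pos_forall_le_mul_rpow_of_eventually {f : ℕ → ℝ≥0∞} {K : ℝ} (hK : 0 ≤ K)
    (hf : ∀ n, f n ≤ 1) (h : ∀ᶠ n in atTop, f n ≤ ENNReal.ofReal ((n : ℝ) ^ (-K))) :
    ∃ c : ℝ, 0 < c ∧ ∀ n : ℕ, 1 ≤ n → f n ≤ ENNReal.ofReal (c * (n : ℝ) ^ (-K)) := by
  obtain ⟨N, hN⟩ := eventually_atTop.1 h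
  refine ⟨(N : ℝ) ^ K + 1, by positivity, fun n hn => ?_⟩
  have hn0 : (0 : ℝ) < n := by exact_mod_cast hn
  rcases le_or_gt N n with hNn | hnN
  · refine (hN n hNn).trans (ENNReal.ofReal_le_ofReal ?_)
    exact le_mul_of_one_le_left (by positivity) (by linarith [Real.rpow_nonneg N.cast_nonneg K])
  · refine (hf n).trans ?_
    rw [← ENNReal.ofReal_one]
    refine ENNReal.ofReal_le_ofReal ?_
    calc (1 : ℝ) = (n : ℝ) ^ K * (n : ℝ) ^ (-K) := by
          rw [← Real.rpow_add hn0, add_neg_cancel, Real.rpow_zero]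
      _ ≤ ((N : ℝ) ^ K + 1) * (n : ℝ) ^ (-K) := by
          gcongr
          linarith [Real.rpow_le_rpow hn0.le (show (n : ℝ) ≤ N by exact_mod_cast hnN.le) hK]

/-- Vertex expansion of small sets in `G_{n,q}`: if `nq/log n → ∞`, then quite surely
every vertex set `S` with `1 ≤ |S| ≤ 1/(100q)` has external neighborhood of size at least
`|S| n q / 100`. -/
theorem small_set_expansion (q : ℕ → ℝ) (hq : ∀ n, 0 < q n ∧ q n < 1)
    (hgrowth : Tendsto (fun n : ℕ => (n : ℝ) * q n / Real.log n) atTop atTop) :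
    ∀ K : ℝ, 0 < K → ∃ c : ℝ, 0 < c ∧ ∀ n : ℕ, 1 ≤ n →
      ERMeasure n (q n)
        {x | ∃ S : Finset (Fin n), S.Nonempty ∧ (S.card : ℝ) ≤ 1 / (100 * q n) ∧
          ({v : Fin n | v ∉ S ∧ ∃ u ∈ S, (graphOf x).Adj u v}.ncard : ℝ) <
            (S.card : ℝ) * n * q n / 100}
        ≤ ENNReal.ofReal (c * (n : ℝ) ^ (-K)) := by
  intro K hK
  refine exists_pos_forall_le_mul_rpow_of_eventually hK.le (fun n => prob_le_one) ?_
  filter_upwards [hgrowth.eventually_ge_atTop (2 * (K + 3)), eventually_ge_atTop 2]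
    with n hgrow hn
  have hlog : 0 < Real.log n := Real.log_pos (by exact_mod_cast hn)
  rw [← ofReal_measureReal]
  exact ENNReal.ofReal_le_ofReal (measureReal_exists_small_set_low_expansion_le_rpow (hq n).1
    (hq n).2.le hK.le hn ((le_div_iff₀ hlog).1 hgrow))

end
end
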